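/- arXiv:2604.17029 — 3 statements merged into one kernel-verified Lean document; each statement's English description precedes it below -/
import Mathlib

section
/- Let G : ℝ² → ℍ be measurable and define I(ω) = ∫₀^∞ ∫_ℝ ‖G(M_{c,α}ᵀ ω)‖² dα c⁻¹ dc ∈ [0,∞]. Then I is constant on the near-field cone {ω = (ω₁,ω₂) : ω₁ > |ω₂|} and constant on the far-field cone {ω : ω₂ > |ω₁|}; that is, if ω and ω′ both lie in the same one of these two open cones then I(ω) = I(ω′). -/
open MeasureTheory Real
open scoped ENNReal Quaternion

noncomputable section

/-- The quaternion imaginary unit `i`. -/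
def qI : ℍ[ℝ] := ⟨0, 1, 0, 0⟩

/-- The quaternion imaginary unit `j`. -/
def qJ : ℍ[ℝ] := ⟨0, 0, 1, 0⟩

/-- Action of the (symmetric) boost matrix `M_{c,α}` (equivalently of `M_{c,α}ᵀ`):
`M_{c,α}` has rows `(c cosh α, -c sinh α)` and `(-c sinh α, c cosh α)`. -/
def Mact (c α : ℝ) (ω : ℝ × ℝ) : ℝ × ℝ :=
  (c * Real.cosh α * ω.1 - c * Real.sinh α * ω.2,
   -(c * Real.sinh α) * ω.1 + c * Real.cosh α * ω.2)

/-- Action of `M_{c,α}⁻¹ = M_{c⁻¹,-α}`. -/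
def Minv (c α : ℝ) (μ : ℝ × ℝ) : ℝ × ℝ := Mact c⁻¹ (-α) μ

/-- Euclidean norm on `ℝ × ℝ`. -/
def en (τ : ℝ × ℝ) : ℝ := Real.sqrt (τ.1 ^ 2 + τ.2 ^ 2)

/-- Scaling invariance of the Haar measure `c⁻¹ dc` on `(0,∞)`. -/
lemma haar_scale (F : ℝ → ℝ≥0∞) (hF : Measurable F) {r : ℝ} (hr : 0 < r) :
    ∫⁻ c in Set.Ioi (0:ℝ), F (r * c) * (ENNReal.ofReal c)⁻¹
      = ∫⁻ c in Set.Ioi (0:ℝ), F c * (ENNReal.ofReal c)⁻¹ := by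
  set H : ℝ → ℝ≥0∞ := fun y => F y * (ENNReal.ofReal y)⁻¹ * ENNReal.ofReal r with hH
  have hHm : Measurable H := by
    exact ((hF.mul (ENNReal.measurable_ofReal.comp measurable_id).inv).mul measurable_const)
  have hmap : Measure.map (fun x => r * x) (volume.restrict (Set.Ioi (0:ℝ)))
      = ENNReal.ofReal r⁻¹ • volume.restrict (Set.Ioi (0:ℝ)) := by
    have hpre : ((fun x => r * x) ⁻¹' Set.Ioi (0:ℝ)) = Set.Ioi 0 := by
      rw [Set.preimage_const_mul_Ioi₀ _ hr, zero_div]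
    conv_lhs => rw [← hpre]
    rw [← Measure.restrict_map (measurable_const_mul r) measurableSet_Ioi,
      Real.map_volume_mul_left hr.ne', abs_of_pos (inv_pos.2 hr), Measure.restrict_smul]
  have key : ∫⁻ x in Set.Ioi (0:ℝ), H (r * x) = ENNReal.ofReal r⁻¹ * ∫⁻ y in Set.Ioi (0:ℝ), H y := by
    rw [← lintegral_map hHm (measurable_const_mul r), hmap, lintegral_smul_measure, smul_eq_mul]
  have e1 : ∫⁻ c in Set.Ioi (0:ℝ), F (r * c) * (ENNReal.ofReal c)⁻¹
      = ∫⁻ x in Set.Ioi (0:ℝ), H (r * x) := by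
    refine setLIntegral_congr_fun measurableSet_Ioi (fun x hx => ?_)
    simp only [hH]
    have hcan : (ENNReal.ofReal (r * x))⁻¹ * ENNReal.ofReal r = (ENNReal.ofReal x)⁻¹ := by
      rw [ENNReal.ofReal_mul hr.le, ENNReal.mul_inv (Or.inl (by simp [hr])) (Or.inl (by simp)),
        mul_comm, ← mul_assoc, ENNReal.mul_inv_cancel (by simp [hr]) (by simp), one_mul]
    rw [mul_assoc, hcan]
  rw [e1, key, hH]
  simp only
  rw [lintegral_mul_const (f := fun y => F y * (ENNReal.ofReal y)⁻¹) _ (hF.mul ENNReal.measurable_ofReal.inv),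
    mul_comm (ENNReal.ofReal r⁻¹), mul_assoc, ← ENNReal.ofReal_mul hr.le,
    mul_inv_cancel₀ hr.ne', ENNReal.ofReal_one, mul_one]

lemma key_eq (G : ℝ × ℝ → ℍ[ℝ]) (hG : StronglyMeasurable G) (p ω : ℝ × ℝ) {r : ℝ} (hr : 0 < r)
    (β : ℝ) (hω : ∀ c α, Mact c α ω = Mact (r * c) (α - β) p) :
    (∫⁻ c in Set.Ioi (0:ℝ), (∫⁻ α : ℝ, (‖G (Mact c α ω)‖₊ : ℝ≥0∞) ^ 2) * (ENNReal.ofReal c)⁻¹)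
      = ∫⁻ c in Set.Ioi (0:ℝ),
          (∫⁻ α : ℝ, (‖G (Mact c α p)‖₊ : ℝ≥0∞) ^ 2) * (ENNReal.ofReal c)⁻¹ := by
  have hMc : Continuous fun q : ℝ × ℝ => Mact q.1 q.2 p := by
    unfold Mact
    fun_prop
  have hFm : Measurable fun c : ℝ => ∫⁻ α : ℝ, (‖G (Mact c α p)‖₊ : ℝ≥0∞) ^ 2 := by
    apply Measurable.lintegral_prod_right'
      (f := fun q : ℝ × ℝ => (‖G (Mact q.1 q.2 p)‖₊ : ℝ≥0∞) ^ 2)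
    exact ((hG.comp_measurable hMc.measurable).nnnorm.measurable.coe_nnreal_ennreal).pow_const 2
  have h1 : ∀ c : ℝ, (∫⁻ α : ℝ, (‖G (Mact c α ω)‖₊ : ℝ≥0∞) ^ 2)
      = ∫⁻ α : ℝ, (‖G (Mact (r * c) α p)‖₊ : ℝ≥0∞) ^ 2 := by
    intro c
    simp only [hω]
    exact lintegral_sub_right_eq_self (fun α => (‖G (Mact (r * c) α p)‖₊ : ℝ≥0∞) ^ 2) β
  calc (∫⁻ c in Set.Ioi (0:ℝ), (∫⁻ α : ℝ, (‖G (Mact c α ω)‖₊ : ℝ≥0∞) ^ 2) * (ENNReal.ofReal c)⁻¹)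
      = ∫⁻ c in Set.Ioi (0:ℝ),
          (∫⁻ α : ℝ, (‖G (Mact (r*c) α p)‖₊ : ℝ≥0∞) ^ 2) * (ENNReal.ofReal c)⁻¹ := by
        simp only [h1]
    _ = _ := haar_scale _ hFm hr

/-- Hyperbolic polar coordinates in the near-field cone. -/
lemma near_param (ω : ℝ × ℝ) (h : ω.1 > |ω.2|) :
    ∃ r β : ℝ, 0 < r ∧ ω.1 = r * Real.cosh β ∧ ω.2 = r * Real.sinh β := by
  have h1pos : 0 < ω.1 := lt_of_le_of_lt (abs_nonneg _) h
  have h2 : ω.2 ^ 2 < ω.1 ^ 2 := by nlinarith [sq_abs ω.2, abs_nonneg ω.2]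
  set r := Real.sqrt (ω.1 ^ 2 - ω.2 ^ 2) with hrdef
  have hr : 0 < r := Real.sqrt_pos.2 (by linarith)
  have hr2 : r ^ 2 = ω.1 ^ 2 - ω.2 ^ 2 := Real.sq_sqrt (by linarith)
  refine ⟨r, Real.arsinh (ω.2 / r), hr, ?_, ?_⟩
  · rw [Real.cosh_arsinh]
    have h' : r ^ 2 * (1 + (ω.2 / r) ^ 2) = ω.1 ^ 2 := by
      field_simp
      nlinarith [hr2]
    calc ω.1 = Real.sqrt (ω.1 ^ 2) := (Real.sqrt_sq h1pos.le).symm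
      _ = Real.sqrt (r ^ 2 * (1 + (ω.2 / r) ^ 2)) := by rw [h']
      _ = Real.sqrt (r ^ 2) * Real.sqrt (1 + (ω.2 / r) ^ 2) := Real.sqrt_mul (sq_nonneg r) _
      _ = r * Real.sqrt (1 + (ω.2 / r) ^ 2) := by rw [Real.sqrt_sq hr.le]
  · rw [Real.sinh_arsinh, mul_div_cancel₀ _ hr.ne']

/-- Hyperbolic polar coordinates in the far-field cone. -/
lemma far_param (ω : ℝ × ℝ) (h : ω.2 > |ω.1|) :
    ∃ r β : ℝ, 0 < r ∧ ω.1 = r * Real.sinh β ∧ ω.2 = r * Real.cosh β := by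
  have h2pos : 0 < ω.2 := lt_of_le_of_lt (abs_nonneg _) h
  have h2 : ω.1 ^ 2 < ω.2 ^ 2 := by nlinarith [sq_abs ω.1, abs_nonneg ω.1]
  set r := Real.sqrt (ω.2 ^ 2 - ω.1 ^ 2) with hrdef
  have hr : 0 < r := Real.sqrt_pos.2 (by linarith)
  have hr2 : r ^ 2 = ω.2 ^ 2 - ω.1 ^ 2 := Real.sq_sqrt (by linarith)
  refine ⟨r, Real.arsinh (ω.1 / r), hr, ?_, ?_⟩
  · rw [Real.sinh_arsinh, mul_div_cancel₀ _ hr.ne']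
  · rw [Real.cosh_arsinh]
    have h' : r ^ 2 * (1 + (ω.1 / r) ^ 2) = ω.2 ^ 2 := by
      field_simp
      nlinarith [hr2]
    calc ω.2 = Real.sqrt (ω.2 ^ 2) := (Real.sqrt_sq h2pos.le).symm
      _ = Real.sqrt (r ^ 2 * (1 + (ω.1 / r) ^ 2)) := by rw [h']
      _ = Real.sqrt (r ^ 2) * Real.sqrt (1 + (ω.1 / r) ^ 2) := Real.sqrt_mul (sq_nonneg r) _
      _ = r * Real.sqrt (1 + (ω.1 / r) ^ 2) := by rw [Real.sqrt_sq hr.le]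

lemma near_Mact {ω : ℝ × ℝ} {r β : ℝ} (e1 : ω.1 = r * Real.cosh β) (e2 : ω.2 = r * Real.sinh β) :
    ∀ c α, Mact c α ω = Mact (r * c) (α - β) ((1:ℝ), (0:ℝ)) := by
  intro c α
  simp only [Mact, Prod.mk.injEq, e1, e2, Real.cosh_sub, Real.sinh_sub]
  constructor <;> ring

lemma far_Mact {ω : ℝ × ℝ} {r β : ℝ} (e1 : ω.1 = r * Real.sinh β) (e2 : ω.2 = r * Real.cosh β) :
    ∀ c α, Mact c α ω = Mact (r * c) (α - β) ((0:ℝ), (1:ℝ)) := by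
  intro c α
  simp only [Mact, Prod.mk.injEq, e1, e2, Real.cosh_sub, Real.sinh_sub]
  constructor <;> ring

/-- `I(ω) = ∫₀^∞ ∫_ℝ ‖G(M_{c,α}ᵀ ω)‖² dα c⁻¹ dc` is constant on the
near-field cone `{ω₁ > |ω₂|}` and constant on the far-field cone `{ω₂ > |ω₁|}`. -/
theorem qbt_cone_invariance (G : ℝ × ℝ → ℍ[ℝ]) (hG : StronglyMeasurable G) :
    let I : ℝ × ℝ → ℝ≥0∞ := fun ω =>
      ∫⁻ c in Set.Ioi (0 : ℝ),
        (∫⁻ α : ℝ, (‖G (Mact c α ω)‖₊ : ℝ≥0∞) ^ 2) * (ENNReal.ofReal c)⁻¹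
    (∀ ω ω' : ℝ × ℝ, ω.1 > |ω.2| → ω'.1 > |ω'.2| → I ω = I ω') ∧
    (∀ ω ω' : ℝ × ℝ, ω.2 > |ω.1| → ω'.2 > |ω'.1| → I ω = I ω') := by
  intro I
  constructor
  · intro ω ω' h h'
    obtain ⟨r, β, hr, e1, e2⟩ := near_param ω h
    obtain ⟨r', β', hr', e1', e2'⟩ := near_param ω' h'
    exact (key_eq G hG ((1:ℝ),(0:ℝ)) ω hr β (near_Mact e1 e2)).trans
      (key_eq G hG ((1:ℝ),(0:ℝ)) ω' hr' β' (near_Mact e1' e2')).symm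
  · intro ω ω' h h'
    obtain ⟨r, β, hr, e1, e2⟩ := far_param ω h
    obtain ⟨r', β', hr', e1', e2'⟩ := far_param ω' h'
    exact (key_eq G hG ((0:ℝ),(1:ℝ)) ω hr β (far_Mact e1 e2)).trans
      (key_eq G hG ((0:ℝ),(1:ℝ)) ω' hr' β' (far_Mact e1' e2')).symm
end
end

section
/- The measure c⁻³ dc dα dτ on (0,∞) × ℝ × ℝ² is invariant under left translation by the boostlet group law: for every c₀ > 0, α₀ ∈ ℝ, τ₀ ∈ ℝ² and every measurable f : (0,∞) × ℝ × ℝ² → [0,∞], ∫₀^∞ ∫_ℝ ∫_{ℝ²} f(c₀·c, α₀ + α, τ₀ + M_{c₀,α₀} τ) c⁻³ dτ dα dc = ∫₀^∞ ∫_ℝ ∫_{ℝ²} f(c, α, τ) c⁻³ dτ dα dc. -/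
open MeasureTheory Real
open scoped ENNReal Quaternion

noncomputable section

/-! The three coordinates decouple. In `τ` the map `τ ↦ τ₀ + M_{c₀,α₀} τ` is affine with
determinant `c₀² (cosh² α₀ - sinh² α₀) = c₀²`, so it rescales Lebesgue measure by `c₀⁻²`; in `α`
the shift preserves Lebesgue measure; and the dilation `c ↦ c₀ c` multiplies `c⁻³ dc` by `c₀²`,
which cancels the factor from the `τ`-integral. -/

section LinearChangeOfVariables

variable {E : Type*} [NormedAddCommGroup E] [NormedSpace ℝ E] [MeasurableSpace E] [BorelSpace E]
  [FiniteDimensional ℝ E] (μ : Measure E) [μ.IsAddHaarMeasure]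

theorem lintegral_comp_add_linearMap {f : E →ₗ[ℝ] E} (hf : LinearMap.det f ≠ 0) (v : E)
    (g : E → ℝ≥0∞) :
    ∫⁻ x, g (v + f x) ∂μ = ENNReal.ofReal |(LinearMap.det f)⁻¹| * ∫⁻ x, g x ∂μ := by
  let e := (f.equivOfDetNeZero hf).toContinuousLinearEquiv.toHomeomorph.toMeasurableEquiv
  calc ∫⁻ x, g (v + f x) ∂μ = ∫⁻ y, g (v + y) ∂(μ.map f) :=
        (lintegral_map_equiv (fun y => g (v + y)) e).symm
    _ = ENNReal.ofReal |(LinearMap.det f)⁻¹| * ∫⁻ y, g (v + y) ∂μ := by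
        rw [Measure.map_linearMap_addHaar_eq_smul_addHaar μ hf, lintegral_smul_measure, smul_eq_mul]
    _ = ENNReal.ofReal |(LinearMap.det f)⁻¹| * ∫⁻ x, g x ∂μ := by
        rw [lintegral_add_left_eq_self g v]

end LinearChangeOfVariables

theorem lintegral_Ioi_comp_mul_left {a : ℝ} (ha : 0 < a) (G : ℝ → ℝ≥0∞) :
    ∫⁻ c in Set.Ioi 0, G (a * c) = ENNReal.ofReal a⁻¹ * ∫⁻ c in Set.Ioi 0, G c := by
  have hpre : (a * ·) ⁻¹' Set.Ioi 0 = Set.Ioi (0 : ℝ) := by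
    ext c; simp [mul_pos_iff_of_pos_left ha]
  calc ∫⁻ c in Set.Ioi 0, G (a * c)
      = ∫⁻ c, G c ∂((volume.restrict (Set.Ioi 0)).map (a * ·)) :=
        (lintegral_map_equiv G (MeasurableEquiv.mulLeft₀ a ha.ne')).symm
    _ = ∫⁻ c, G c ∂((volume.map (a * ·)).restrict (Set.Ioi 0)) := by
        rw [Measure.restrict_map (measurable_const_mul a) measurableSet_Ioi, hpre]
    _ = ENNReal.ofReal a⁻¹ * ∫⁻ c in Set.Ioi 0, G c := by
        rw [Real.map_volume_mul_left ha.ne', Measure.restrict_smul, lintegral_smul_measure,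
          abs_of_pos (inv_pos.mpr ha), smul_eq_mul]

theorem lintegral_Ioi_comp_mul_left_mul_inv_pow {a : ℝ} (ha : 0 < a) (n : ℕ) (G : ℝ → ℝ≥0∞) :
    ∫⁻ c in Set.Ioi 0, G (a * c) * (ENNReal.ofReal (c ^ (n + 1)))⁻¹
      = ENNReal.ofReal (a ^ n) * ∫⁻ c in Set.Ioi 0, G c * (ENNReal.ofReal (c ^ (n + 1)))⁻¹ := by
  have hweight : ∀ c ∈ Set.Ioi (0 : ℝ), G (a * c) * (ENNReal.ofReal (c ^ (n + 1)))⁻¹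
      = ENNReal.ofReal (a ^ (n + 1)) * (G (a * c) * (ENNReal.ofReal ((a * c) ^ (n + 1)))⁻¹) := by
    intro c (hc : 0 < c)
    rw [← ENNReal.ofReal_inv_of_pos (by positivity), ← ENNReal.ofReal_inv_of_pos (by positivity),
      mul_left_comm, ← ENNReal.ofReal_mul (by positivity), mul_pow, mul_inv,
      mul_inv_cancel_left₀ (by positivity)]
  rw [setLIntegral_congr_fun measurableSet_Ioi hweight,
    lintegral_const_mul' _ _ ENNReal.ofReal_ne_top,
    lintegral_Ioi_comp_mul_left ha fun c => G c * (ENNReal.ofReal (c ^ (n + 1)))⁻¹,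
    ← mul_assoc, ← ENNReal.ofReal_mul (by positivity), pow_succ, mul_inv_cancel_right₀ ha.ne']

def Mact.linearMap (c α : ℝ) : (ℝ × ℝ) →ₗ[ℝ] ℝ × ℝ where
  toFun := Mact c α
  map_add' x y := by simp only [Mact, Prod.fst_add, Prod.snd_add, Prod.mk_add_mk]; ring_nf
  map_smul' r x := by
    simp only [Mact, Prod.smul_fst, Prod.smul_snd, Prod.smul_mk, smul_eq_mul, RingHom.id_apply]
    ring_nf

theorem Mact.det_linearMap (c α : ℝ) : LinearMap.det (Mact.linearMap c α) = c ^ 2 := by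
  rw [← LinearMap.det_toMatrix (Module.Basis.finTwoProd ℝ), Matrix.det_fin_two]
  simp [LinearMap.toMatrix_apply, Mact.linearMap, Mact]
  linear_combination c ^ 2 * Real.cosh_sq_sub_sinh_sq α

theorem lintegral_add_Mact {c : ℝ} (hc : c ≠ 0) (α : ℝ) (τ₀ : ℝ × ℝ) (g : ℝ × ℝ → ℝ≥0∞) :
    ∫⁻ τ, g (τ₀ + Mact c α τ) = ENNReal.ofReal (c ^ 2)⁻¹ * ∫⁻ τ, g τ := by
  have hdet : LinearMap.det (Mact.linearMap c α) ≠ 0 := by rw [Mact.det_linearMap]; positivity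
  have := lintegral_comp_add_linearMap volume hdet τ₀ g
  rwa [Mact.det_linearMap, abs_of_pos (by positivity)] at this

theorem boostlet_haar_left_invariance_general (f : ℝ × ℝ × (ℝ × ℝ) → ℝ≥0∞) :
    ∀ c₀ : ℝ, 0 < c₀ → ∀ α₀ : ℝ, ∀ τ₀ : ℝ × ℝ,
      ∫⁻ c in Set.Ioi (0 : ℝ),
          (∫⁻ α : ℝ, ∫⁻ τ : ℝ × ℝ, f (c₀ * c, α₀ + α, τ₀ + Mact c₀ α₀ τ))
            * (ENNReal.ofReal (c ^ 3))⁻¹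
        = ∫⁻ c in Set.Ioi (0 : ℝ),
            (∫⁻ α : ℝ, ∫⁻ τ : ℝ × ℝ, f (c, α, τ)) * (ENNReal.ofReal (c ^ 3))⁻¹ := by
  intro c₀ hc₀ α₀ τ₀
  have translate : ∀ c, ∫⁻ α, ∫⁻ τ, f (c₀ * c, α₀ + α, τ₀ + Mact c₀ α₀ τ)
      = ENNReal.ofReal (c₀ ^ 2)⁻¹ * ∫⁻ α, ∫⁻ τ, f (c₀ * c, α, τ) := fun c => by
    rw [lintegral_congr fun α => lintegral_add_Mact hc₀.ne' α₀ τ₀ (fun τ => f (c₀ * c, α₀ + α, τ)),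
      lintegral_const_mul' _ _ ENNReal.ofReal_ne_top,
      lintegral_add_left_eq_self (fun α => ∫⁻ τ, f (c₀ * c, α, τ))]
  simp_rw [translate, mul_assoc]
  rw [lintegral_const_mul' _ _ ENNReal.ofReal_ne_top,
    lintegral_Ioi_comp_mul_left_mul_inv_pow hc₀ 2 (fun c => ∫⁻ α, ∫⁻ τ, f (c, α, τ)),
    ← mul_assoc, ← ENNReal.ofReal_mul (by positivity), inv_mul_cancel₀ (by positivity),
    ENNReal.ofReal_one, one_mul]

/-- left invariance of the Haar measure `c⁻³ dc dα dτ` of the boostlet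
group under the group law `(c₀,α₀,τ₀)·(c,α,τ) = (c₀c, α₀+α, τ₀ + M_{c₀,α₀}τ)`. -/
theorem boostlet_haar_left_invariance (f : ℝ × ℝ × (ℝ × ℝ) → ℝ≥0∞) (hf : Measurable f) :
    ∀ c₀ : ℝ, 0 < c₀ → ∀ α₀ : ℝ, ∀ τ₀ : ℝ × ℝ,
      ∫⁻ c in Set.Ioi (0 : ℝ),
          (∫⁻ α : ℝ, ∫⁻ τ : ℝ × ℝ, f (c₀ * c, α₀ + α, τ₀ + Mact c₀ α₀ τ))
            * (ENNReal.ofReal (c ^ 3))⁻¹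
        = ∫⁻ c in Set.Ioi (0 : ℝ),
            (∫⁻ α : ℝ, ∫⁻ τ : ℝ × ℝ, f (c, α, τ)) * (ENNReal.ofReal (c ^ 3))⁻¹ :=
  boostlet_haar_left_invariance_general f
end
end

section
/- Let F : ℝ² → ℍ be continuous with F ∈ L¹(ℝ²,ℍ) and F̂ ∈ L¹(ℝ²,ℍ). Then for every (s,t) ∈ ℝ², F(s,t) = ∫_{ℝ²} (cos(2πω₁s) + sin(2πω₁s)·i) · F̂(ω₁,ω₂) · (cos(2πω₂t) + sin(2πω₂t)·j) dω₁ dω₂. -/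
open MeasureTheory Real
open scoped ENNReal Quaternion

noncomputable section

/-- The two-sided quaternion Fourier transform. -/
def QFT (F : ℝ × ℝ → ℍ[ℝ]) (ω : ℝ × ℝ) : ℍ[ℝ] :=
  ∫ μ : ℝ × ℝ,
    (((Real.cos (2 * π * ω.1 * μ.1) : ℝ) : ℍ[ℝ]) - Real.sin (2 * π * ω.1 * μ.1) • qI)
      * F μ *
    (((Real.cos (2 * π * ω.2 * μ.2) : ℝ) : ℍ[ℝ]) - Real.sin (2 * π * ω.2 * μ.2) • qJ)

/-! ### Auxiliary material: complex inversion on `ℝ × ℝ` -/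

open Complex FourierTransform
open scoped RealInnerProductSpace

abbrev E2 := EuclideanSpace ℝ (Fin 2)

def η : E2 ≃ᵐ ℝ × ℝ :=
  (MeasurableEquiv.toLp 2 (Fin 2 → ℝ)).symm.trans (MeasurableEquiv.piFinTwo fun _ => ℝ)

lemma ηMP : MeasurePreserving η volume volume :=
  (volume_preserving_piFinTwo fun _ => ℝ).comp
    (EuclideanSpace.volume_preserving_symm_measurableEquiv_toLp (Fin 2))

lemma η_apply (v : E2) : η v = (v 0, v 1) := rfl
lemma ηsymm0 (μ : ℝ × ℝ) : η.symm μ 0 = μ.1 := rfl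
lemma ηsymm1 (μ : ℝ × ℝ) : η.symm μ 1 = μ.2 := rfl

lemma inner_eq (v w : E2) : ⟪v, w⟫ = v 0 * w 0 + v 1 * w 1 := by
  simp [PiLp.inner_apply, Fin.sum_univ_two, RCLike.inner_apply, mul_comm]

/-- The standard 2D Fourier transform on `ℝ × ℝ` (ℂ-valued). -/
def ftS (g : ℝ × ℝ → ℂ) (ω : ℝ × ℝ) : ℂ :=
  ∫ ν : ℝ × ℝ, Complex.exp ((-(2 * π * (ω.1 * ν.1 + ω.2 * ν.2)) : ℝ) * Complex.I) • g ν

lemma ft_eq (g : ℝ × ℝ → ℂ) (w : E2) : 𝓕 (g ∘ η) w = ftS g (η w) := by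
  rw [Real.fourier_eq', ftS, ← ηMP.integral_comp']
  congr 1 with v
  rw [inner_eq, η_apply, η_apply]
  norm_num
  ring_nf
  rfl

lemma inv2d (g : ℝ × ℝ → ℂ) (hg : Continuous g) (h1 : Integrable g)
    (h2 : Integrable (ftS g)) (μ : ℝ × ℝ) :
    ∫ ω : ℝ × ℝ, Complex.exp (((2 * π * (ω.1 * μ.1 + ω.2 * μ.2)) : ℝ) * Complex.I) • ftS g ω
      = g μ := by
  have hη : Continuous (fun v : E2 => (v 0, v 1)) := by fun_prop
  have hg' : Continuous (g ∘ η) := hg.comp hη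
  have h1' : Integrable (g ∘ η) := (ηMP.integrable_comp_emb η.measurableEmbedding).2 h1
  have hft : 𝓕 (g ∘ η) = ftS g ∘ η := funext (ft_eq g)
  have h2' : Integrable (𝓕 (g ∘ η)) := by
    rw [hft]; exact (ηMP.integrable_comp_emb η.measurableEmbedding).2 h2
  have key := hg'.fourierInv_fourier_eq h1' h2'
  have hkey := congrFun key (η.symm μ)
  rw [Real.fourierInv_eq', hft] at hkey
  rw [← ηMP.integral_comp' (g := fun ω : ℝ × ℝ =>
    Complex.exp (((2 * π * (ω.1 * μ.1 + ω.2 * μ.2)) : ℝ) * Complex.I) • ftS g ω)]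
  rw [show (g ∘ η) (η.symm μ) = g μ by simp] at hkey
  rw [← hkey]
  congr 1 with v
  rw [inner_eq, η_apply, ηsymm0, ηsymm1]
  norm_num
  rfl

/-! ### The splitting of `ℍ` into two complex planes -/

section qmk

variable (a b c d e f g h x s : ℝ)

@[simp] lemma qmk_add : (⟨a, b, c, d⟩ + ⟨e, f, g, h⟩ : ℍ[ℝ]) = ⟨a + e, b + f, c + g, d + h⟩ := rfl
@[simp] lemma qmk_sub : (⟨a, b, c, d⟩ - ⟨e, f, g, h⟩ : ℍ[ℝ]) = ⟨a - e, b - f, c - g, d - h⟩ := rfl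
@[simp] lemma qmk_smul : (s • ⟨a, b, c, d⟩ : ℍ[ℝ]) = ⟨s * a, s * b, s * c, s * d⟩ := rfl
@[simp] lemma qcoe_mk : ((x : ℝ) : ℍ[ℝ]) = ⟨x, 0, 0, 0⟩ := rfl
@[simp] lemma qmk_mul : (⟨a, b, c, d⟩ * ⟨e, f, g, h⟩ : ℍ[ℝ]) =
    ⟨a * e - b * f - c * g - d * h, a * f + b * e + c * h - d * g,
      a * g - b * h + c * e + d * f, a * h + b * g - c * f + d * e⟩ := by
  refine QuaternionAlgebra.ext ?_ ?_ ?_ ?_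
  · exact (Quaternion.re_mul _ _).trans (by dsimp only)
  · exact (Quaternion.imI_mul _ _).trans (by dsimp only)
  · exact (Quaternion.imJ_mul _ _).trans (by dsimp only)
  · exact (Quaternion.imK_mul _ _).trans (by dsimp only)

end qmk

def phiPl : ℂ →ₗ[ℝ] ℍ[ℝ] where
  toFun z := ⟨z.re, z.im, -z.im, z.re⟩
  map_add' x y := by ext <;> simp <;> ring
  map_smul' c x := by ext <;> simp [QuaternionAlgebra.smul_mk] <;> ring

def phiMl : ℂ →ₗ[ℝ] ℍ[ℝ] where
  toFun z := ⟨z.re, z.im, z.im, -z.re⟩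
  map_add' x y := by ext <;> simp <;> ring
  map_smul' c x := by ext <;> simp [QuaternionAlgebra.smul_mk] <;> ring

def psiPl : ℍ[ℝ] →ₗ[ℝ] ℂ where
  toFun q := ⟨(q.re + q.imK) / 2, (q.imI - q.imJ) / 2⟩
  map_add' x y := by apply Complex.ext <;> simp <;> ring
  map_smul' c x := by apply Complex.ext <;> simp <;> ring

def psiMl : ℍ[ℝ] →ₗ[ℝ] ℂ where
  toFun q := ⟨(q.re - q.imK) / 2, (q.imI + q.imJ) / 2⟩
  map_add' x y := by apply Complex.ext <;> simp <;> ring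
  map_smul' c x := by apply Complex.ext <;> simp <;> ring

def phiP : ℂ →L[ℝ] ℍ[ℝ] := phiPl.toContinuousLinearMap
def phiM : ℂ →L[ℝ] ℍ[ℝ] := phiMl.toContinuousLinearMap
def psiP : ℍ[ℝ] →L[ℝ] ℂ := psiPl.toContinuousLinearMap
def psiM : ℍ[ℝ] →L[ℝ] ℂ := psiMl.toContinuousLinearMap

lemma phiP_apply (z : ℂ) : phiP z = ⟨z.re, z.im, -z.im, z.re⟩ := rfl
lemma phiM_apply (z : ℂ) : phiM z = ⟨z.re, z.im, z.im, -z.re⟩ := rfl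
lemma psiP_apply (q : ℍ[ℝ]) : psiP q = ⟨(q.re + q.imK) / 2, (q.imI - q.imJ) / 2⟩ := rfl
lemma psiM_apply (q : ℍ[ℝ]) : psiM q = ⟨(q.re - q.imK) / 2, (q.imI + q.imJ) / 2⟩ := rfl
@[simp] lemma psiP_mk (a b c d : ℝ) : psiP ⟨a, b, c, d⟩ = ⟨(a + d) / 2, (b - c) / 2⟩ := rfl
@[simp] lemma psiM_mk (a b c d : ℝ) : psiM ⟨a, b, c, d⟩ = ⟨(a - d) / 2, (b + c) / 2⟩ := rfl

lemma decomp (q : ℍ[ℝ]) : phiP (psiP q) + phiM (psiM q) = q := by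
  ext <;> simp [phiP_apply, phiM_apply, psiP_apply, psiM_apply] <;> ring

lemma psiP_phiP (z : ℂ) : psiP (phiP z) = z := by
  apply Complex.ext <;> simp [phiP_apply, psiP_apply] <;> ring
lemma psiP_phiM (z : ℂ) : psiP (phiM z) = 0 := by
  apply Complex.ext <;> simp [phiM_apply, psiP_apply]
lemma psiM_phiM (z : ℂ) : psiM (phiM z) = z := by
  apply Complex.ext <;> simp [phiM_apply, psiM_apply] <;> ring
lemma psiM_phiP (z : ℂ) : psiM (phiP z) = 0 := by
  apply Complex.ext <;> simp [phiP_apply, psiM_apply]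

lemma expc (x : ℝ) : Complex.exp ((x : ℂ) * Complex.I) = ⟨Real.cos x, Real.sin x⟩ := by
  rw [Complex.exp_mul_I]
  apply Complex.ext <;> simp [Complex.cos_ofReal_re, Complex.sin_ofReal_re]

/-! ### Kernel actions -/

lemma kernPneg (a b c : ℝ) (h : c = b - a) (z : ℂ) :
    (((Real.cos a : ℝ) : ℍ[ℝ]) - Real.sin a • qI) * phiP z
      * (((Real.cos b : ℝ) : ℍ[ℝ]) - Real.sin b • qJ)
      = phiP (Complex.exp ((c : ℂ) * Complex.I) * z) := by
  subst h
  rw [expc]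
  ext <;>
    simp [phiP_apply, qI, qJ, Real.cos_sub, Real.sin_sub, Complex.mul_re, Complex.mul_im] <;>
    ring

lemma kernMneg (a b c : ℝ) (h : c = -(a + b)) (z : ℂ) :
    (((Real.cos a : ℝ) : ℍ[ℝ]) - Real.sin a • qI) * phiM z
      * (((Real.cos b : ℝ) : ℍ[ℝ]) - Real.sin b • qJ)
      = phiM (Complex.exp ((c : ℂ) * Complex.I) * z) := by
  subst h
  rw [expc]
  ext <;>
    simp [phiM_apply, qI, qJ, Real.cos_add, Real.sin_add, Complex.mul_re, Complex.mul_im] <;>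
    ring

lemma kernPpos (a b c : ℝ) (h : c = a - b) (z : ℂ) :
    (((Real.cos a : ℝ) : ℍ[ℝ]) + Real.sin a • qI) * phiP z
      * (((Real.cos b : ℝ) : ℍ[ℝ]) + Real.sin b • qJ)
      = phiP (Complex.exp ((c : ℂ) * Complex.I) * z) := by
  subst h
  rw [expc]
  ext <;>
    simp [phiP_apply, qI, qJ, Real.cos_sub, Real.sin_sub, Complex.mul_re, Complex.mul_im] <;>
    ring

lemma kernMpos (a b c : ℝ) (h : c = a + b) (z : ℂ) :
    (((Real.cos a : ℝ) : ℍ[ℝ]) + Real.sin a • qI) * phiM z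
      * (((Real.cos b : ℝ) : ℍ[ℝ]) + Real.sin b • qJ)
      = phiM (Complex.exp ((c : ℂ) * Complex.I) * z) := by
  subst h
  rw [expc]
  ext <;>
    simp [phiM_apply, qI, qJ, Real.cos_add, Real.sin_add, Complex.mul_re, Complex.mul_im] <;>
    ring

/-! ### Reflection in the second variable -/

def Re2 : (ℝ × ℝ) ≃ᵐ ℝ × ℝ :=
  (MeasurableEquiv.refl ℝ).prodCongr (Homeomorph.neg ℝ).toMeasurableEquiv

lemma Re2_apply (p : ℝ × ℝ) : Re2 p = (p.1, -p.2) := rfl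

lemma Re2MP : MeasurePreserving Re2 volume volume := by
  have h := (MeasurePreserving.id (volume : Measure ℝ)).prod
    (Measure.measurePreserving_neg (volume : Measure ℝ))
  rw [← Measure.volume_eq_prod] at h
  exact h

/-! ### Bounded-kernel integrability -/

lemma mul_add_mul_q (a b c d : ℍ[ℝ]) : a * (b + c) * d = a * b * d + a * c * d := by
  rw [mul_add, add_mul]

lemma mul_kernel_integrable {g : ℝ × ℝ → ℂ} (hg : Integrable g) (c : ℝ × ℝ → ℝ)
    (hc : Continuous c) :
    Integrable fun ν => Complex.exp ((c ν : ℂ) * Complex.I) * g ν := by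
  apply hg.bdd_mul (c := 1)
  · exact (Complex.continuous_exp.comp (by fun_prop)).aestronglyMeasurable
  · exact ae_of_all _ fun ν => by
      rw [Complex.norm_exp]
      simp

/-- pointwise inversion formula for the two-sided quaternion Fourier
transform of a continuous function with integrable transform. -/
theorem qft_inversion (F : ℝ × ℝ → ℍ[ℝ]) (hc : Continuous F)
    (hF1 : MemLp F 1 volume) (hFhat1 : MemLp (QFT F) 1 volume) :
    ∀ μ : ℝ × ℝ,
      F μ = ∫ ω : ℝ × ℝ,
        (((Real.cos (2 * π * ω.1 * μ.1) : ℝ) : ℍ[ℝ]) + Real.sin (2 * π * ω.1 * μ.1) • qI)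
          * QFT F ω *
        (((Real.cos (2 * π * ω.2 * μ.2) : ℝ) : ℍ[ℝ]) + Real.sin (2 * π * ω.2 * μ.2) • qJ) := by
  intro μ
  have FInt : Integrable F := memLp_one_iff_integrable.mp hF1
  have QInt : Integrable (QFT F) := memLp_one_iff_integrable.mp hFhat1
  set gP : ℝ × ℝ → ℂ := fun ν => psiP (F ν) with hgP
  set gM : ℝ × ℝ → ℂ := fun ν => psiM (F ν) with hgM
  have hgPc : Continuous gP := psiP.continuous.comp hc
  have hgMc : Continuous gM := psiM.continuous.comp hc
  have hgPi : Integrable gP := psiP.integrable_comp FInt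
  have hgMi : Integrable gM := psiM.integrable_comp FInt
  -- Step 1: the QFT splits into two complex Fourier transforms.
  have step1 : ∀ ω : ℝ × ℝ, QFT F ω = phiP (ftS gP (ω.1, -ω.2)) + phiM (ftS gM ω) := by
    intro ω
    have hiP : Integrable fun ν : ℝ × ℝ =>
        Complex.exp (((-(2 * π * (ω.1 * ν.1 + -ω.2 * ν.2)) : ℝ)) * Complex.I) * gP ν :=
      mul_kernel_integrable hgPi _ (by fun_prop)
    have hiM : Integrable fun ν : ℝ × ℝ =>
        Complex.exp (((-(2 * π * (ω.1 * ν.1 + ω.2 * ν.2)) : ℝ)) * Complex.I) * gM ν :=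
      mul_kernel_integrable hgMi _ (by fun_prop)
    have hpt : ∀ ν : ℝ × ℝ,
        (((Real.cos (2 * π * ω.1 * ν.1) : ℝ) : ℍ[ℝ]) - Real.sin (2 * π * ω.1 * ν.1) • qI)
          * F ν *
        (((Real.cos (2 * π * ω.2 * ν.2) : ℝ) : ℍ[ℝ]) - Real.sin (2 * π * ω.2 * ν.2) • qJ)
        = phiP (Complex.exp (((-(2 * π * (ω.1 * ν.1 + -ω.2 * ν.2)) : ℝ)) * Complex.I) * gP ν)
          + phiM (Complex.exp (((-(2 * π * (ω.1 * ν.1 + ω.2 * ν.2)) : ℝ)) * Complex.I) * gM ν) := by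
      intro ν
      conv_lhs => rw [← decomp (F ν)]
      rw [mul_add_mul_q,
        kernPneg (2 * π * ω.1 * ν.1) (2 * π * ω.2 * ν.2)
          (-(2 * π * (ω.1 * ν.1 + -ω.2 * ν.2))) (by ring),
        kernMneg (2 * π * ω.1 * ν.1) (2 * π * ω.2 * ν.2)
          (-(2 * π * (ω.1 * ν.1 + ω.2 * ν.2))) (by ring)]
    rw [QFT, integral_congr_ae (ae_of_all _ hpt), integral_add
        (phiP.integrable_comp hiP) (phiM.integrable_comp hiM),
      ContinuousLinearMap.integral_comp_comm _ hiP,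
      ContinuousLinearMap.integral_comp_comm _ hiM]
    simp only [ftS, smul_eq_mul]
  -- identification of the two complex transforms
  have hftP : ∀ ω : ℝ × ℝ, ftS gP ω = psiP (QFT F (ω.1, -ω.2)) := by
    intro ω
    rw [step1 (ω.1, -ω.2)]
    simp only [map_add, psiP_phiP, psiP_phiM, add_zero, neg_neg]
  have hftM : ∀ ω : ℝ × ℝ, ftS gM ω = psiM (QFT F ω) := by
    intro ω
    rw [step1 ω]
    simp only [map_add, psiM_phiM, psiM_phiP, zero_add]
  have hQP : Integrable fun ω : ℝ × ℝ => psiP (QFT F ω) := psiP.integrable_comp QInt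
  have hQM : Integrable fun ω : ℝ × ℝ => psiM (QFT F ω) := psiM.integrable_comp QInt
  have hftPi : Integrable (ftS gP) := by
    have h2 : Integrable fun ω : ℝ × ℝ => psiP (QFT F (Re2 ω)) :=
      (Re2MP.integrable_comp_emb Re2.measurableEmbedding).2 hQP
    refine h2.congr (ae_of_all _ fun ω => ?_)
    show psiP (QFT F (Re2 ω)) = ftS gP ω
    rw [Re2_apply]
    exact (hftP ω).symm
  have hftMi : Integrable (ftS gM) := by
    refine hQM.congr (ae_of_all _ fun ω => ?_)
    exact (hftM ω).symm
  -- Step 2: complex inversion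
  have invP := inv2d gP hgPc hgPi hftPi μ
  have invM := inv2d gM hgMc hgMi hftMi μ
  -- Step 3: compute the inversion integral
  have hiP' : Integrable fun ω : ℝ × ℝ =>
      Complex.exp (((2 * π * (ω.1 * μ.1 + -ω.2 * μ.2)) : ℝ) * Complex.I) * psiP (QFT F ω) :=
    mul_kernel_integrable hQP _ (by fun_prop)
  have hiM' : Integrable fun ω : ℝ × ℝ =>
      Complex.exp (((2 * π * (ω.1 * μ.1 + ω.2 * μ.2)) : ℝ) * Complex.I) * psiM (QFT F ω) :=
    mul_kernel_integrable hQM _ (by fun_prop)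
  have hpt' : ∀ ω : ℝ × ℝ,
      (((Real.cos (2 * π * ω.1 * μ.1) : ℝ) : ℍ[ℝ]) + Real.sin (2 * π * ω.1 * μ.1) • qI)
        * QFT F ω *
      (((Real.cos (2 * π * ω.2 * μ.2) : ℝ) : ℍ[ℝ]) + Real.sin (2 * π * ω.2 * μ.2) • qJ)
      = phiP (Complex.exp (((2 * π * (ω.1 * μ.1 + -ω.2 * μ.2)) : ℝ) * Complex.I)
            * psiP (QFT F ω))
        + phiM (Complex.exp (((2 * π * (ω.1 * μ.1 + ω.2 * μ.2)) : ℝ) * Complex.I)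
            * psiM (QFT F ω)) := by
    intro ω
    conv_lhs => rw [← decomp (QFT F ω)]
    rw [mul_add_mul_q,
      kernPpos (2 * π * ω.1 * μ.1) (2 * π * ω.2 * μ.2)
        (2 * π * (ω.1 * μ.1 + -ω.2 * μ.2)) (by ring),
      kernMpos (2 * π * ω.1 * μ.1) (2 * π * ω.2 * μ.2)
        (2 * π * (ω.1 * μ.1 + ω.2 * μ.2)) (by ring)]
  rw [integral_congr_ae (ae_of_all _ hpt'), integral_add
      (phiP.integrable_comp hiP') (phiM.integrable_comp hiM'),
    ContinuousLinearMap.integral_comp_comm _ hiP',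
    ContinuousLinearMap.integral_comp_comm _ hiM']
  have eqM : (∫ ω : ℝ × ℝ,
      Complex.exp (((2 * π * (ω.1 * μ.1 + ω.2 * μ.2)) : ℝ) * Complex.I) * psiM (QFT F ω))
      = gM μ := by
    rw [← invM]
    refine integral_congr_ae (ae_of_all _ fun ω => ?_)
    simp only [smul_eq_mul, hftM]
  have eqP : (∫ ω : ℝ × ℝ,
      Complex.exp (((2 * π * (ω.1 * μ.1 + -ω.2 * μ.2)) : ℝ) * Complex.I) * psiP (QFT F ω))
      = gP μ := by
    rw [← Re2MP.integral_comp' (g := fun ω : ℝ × ℝ =>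
      Complex.exp (((2 * π * (ω.1 * μ.1 + -ω.2 * μ.2)) : ℝ) * Complex.I) * psiP (QFT F ω))]
    rw [← invP]
    refine integral_congr_ae (ae_of_all _ fun ω => ?_)
    simp only [smul_eq_mul, hftP, Re2_apply]
    norm_num
  rw [eqP, eqM, decomp]
end
end
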